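/- Let A be finite with 0 ≤ ℓ ≤ u and 𝒫 a finite collection of subsets of A. A path P ∈ 𝒫 is shortest for some scenario (i.e., there exists c ∈ [ℓ,u] with c(P) ≤ c(P') for all P' ∈ 𝒫) if and only if no P' ∈ 𝒫 strictly dominates P (where P' ≺ P means c(P') < c(P) for all c ∈ [ℓ,u]), and this is further equivalent to: β(P)(P) ≤ β(P)(P') for all P' ∈ 𝒫. -/
import Mathlib


open Finset

noncomputable def cost {A : Type*} (c : A → ℝ) (Q : Finset A) : ℝ := ∑ a ∈ Q, c a

noncomputable def best {A : Type*} [DecidableEq A] (ℓ u : A → ℝ) (P : Finset A) : A → ℝ :=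
  fun a => if a ∈ P then ℓ a else u a

def IsScenario {A : Type*} (ℓ u c : A → ℝ) : Prop := ∀ a, ℓ a ≤ c a ∧ c a ≤ u a

lemma cost_split {A : Type*} [DecidableEq A] (c : A → ℝ) (Q R : Finset A) :
    cost c Q = cost c (Q \ R) + cost c (Q ∩ R) := by
  unfold cost
  rw [← Finset.sum_union (Finset.disjoint_sdiff_inter _ _), Finset.sdiff_union_inter]

lemma key {A : Type*} [DecidableEq A] (ℓ u c : A → ℝ) (hc : IsScenario ℓ u c)
    (P P' : Finset A) :
    cost c P' - cost c P ≤ cost (best ℓ u P) P' - cost (best ℓ u P) P := by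
  rw [cost_split c P' P, cost_split c P P', cost_split (best ℓ u P) P' P,
    cost_split (best ℓ u P) P P', Finset.inter_comm P P']
  have h1 : cost c (P' \ P) ≤ cost (best ℓ u P) (P' \ P) := by
    apply Finset.sum_le_sum
    intro a ha
    simp only [best, if_neg (Finset.mem_sdiff.mp ha).2]
    exact (hc a).2
  have h2 : cost (best ℓ u P) (P \ P') ≤ cost c (P \ P') := by
    apply Finset.sum_le_sum
    intro a ha
    simp only [best, if_pos (Finset.mem_sdiff.mp ha).1]
    exact (hc a).1
  linarith

theorem stmt9 {A : Type*} [Fintype A] [DecidableEq A] (ℓ u : A → ℝ)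
    (h0 : ∀ a, 0 ≤ ℓ a) (hlu : ∀ a, ℓ a ≤ u a)
    (Ps : Finset (Finset A)) (P : Finset A) (hP : P ∈ Ps) :
    [ (∃ c : A → ℝ, IsScenario ℓ u c ∧ ∀ P' ∈ Ps, cost c P ≤ cost c P'),
      (∀ P' ∈ Ps, ¬ (∀ c : A → ℝ, IsScenario ℓ u c → cost c P' < cost c P)),
      (∀ P' ∈ Ps, cost (best ℓ u P) P ≤ cost (best ℓ u P) P') ].TFAE := by
  have hbest : IsScenario ℓ u (best ℓ u P) := by
    intro a
    unfold best
    split <;> constructor <;> first | rfl | exact hlu a | exact le_refl _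
  tfae_have 1 → 2 := by
    rintro ⟨c, hc, hmin⟩ P' hP' hdom
    exact absurd (hmin P' hP') (not_le.mpr (hdom c hc))
  tfae_have 2 → 3 := by
    intro h2 P' hP'
    by_contra hlt
    push_neg at hlt
    apply h2 P' hP'
    intro c hc
    have := key ℓ u c hc P P'
    linarith
  tfae_have 3 → 1 := fun h3 => ⟨best ℓ u P, hbest, h3⟩
  tfae_finish
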